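/- Fix κ = 0.9 and let 0 < τ ≤ 1/2. Let u, w : ℝ → ℝ be smooth, odd, 2π-periodic functions satisfying the implicit-explicit relation w(x) − κ² τ w''(x) = u(x) − τ (u(x)³ − u(x)) for all x ∈ ℝ. Assume E(u) ≤ π/2 − 0.001, ‖u‖_∞ ≤ 1.1 and ‖w‖_∞ ≤ 1.1. Then (1/(5τ)) ‖w − u‖_{L²(−π,π)}² + (κ²/2) ‖(w − u)'‖_{L²(−π,π)}² + E(w) ≤ E(u). -/

import Mathlib

open Real MeasureTheory Set

noncomputable section

/-- An odd zero-up ground state for parameter `κ`: a `2π`-periodic, odd, twice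
continuously differentiable function `U : ℝ → ℝ` satisfying
`κ² U'' + U − U³ = 0` on `ℝ`, with `U' > 0` on `[0, π/2)` and `U' < 0` on `(π/2, π]`. -/
def IsOddZeroUpGroundState (κ : ℝ) (U : ℝ → ℝ) : Prop :=
  ContDiff ℝ 2 U ∧
  Function.Periodic U (2 * π) ∧
  (∀ x : ℝ, U (-x) = - U x) ∧
  (∀ x : ℝ, κ ^ 2 * deriv (deriv U) x + U x - U x ^ 3 = 0) ∧
  (∀ x ∈ Set.Ico (0 : ℝ) (π / 2), 0 < deriv U x) ∧
  (∀ x ∈ Set.Ioc (π / 2) π, deriv U x < 0)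

/-- The Allen–Cahn energy with diffusion coefficient `κ`. -/
def energy (κ : ℝ) (u : ℝ → ℝ) : ℝ :=
  ∫ x in (-π)..π, (κ ^ 2 / 2 * (deriv u x) ^ 2 + (1 - u x ^ 2) ^ 2 / 4)

/-- The `L²` norm over one period `(-π, π)`. -/
def L2norm (f : ℝ → ℝ) : ℝ := Real.sqrt (∫ x in (-π)..π, (f x) ^ 2)

/-- The `H¹` norm over one period `(-π, π)`. -/
def H1norm (f : ℝ → ℝ) : ℝ := Real.sqrt (L2norm f ^ 2 + L2norm (deriv f) ^ 2)

/-! With `v = w - u`, the scheme gives `(u³ - u) v = κ² v w'' - v² / τ`, and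
`κ²/2 (w'² - u'²) = κ² v' w' - κ²/2 v'²`. Together with the second-order Taylor bound of the
double-well potential `(1 - s²)²/4` on `[-M, M]`, whose second derivative is at most `3M² - 1`,
the energy density of `w` plus `(1/τ - (3M² - 1)/2) v² + κ²/2 v'²` is bounded pointwise by the
density of `u` plus the exact derivative `κ² (v w')'`, which integrates to zero over a period.
For `M = 1.1` the constant `(3M² - 1)/2 = 1.315` is below `4/(5τ)` when `τ ≤ 1/2`, which leaves
the coefficient `1/(5τ)`. -/

theorem Function.Periodic.deriv {f : ℝ → ℝ} {T : ℝ} (h : Function.Periodic f T) :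
    Function.Periodic (deriv f) T := fun x => by
  rw [← deriv_comp_add_const, h.funext]

theorem Function.Periodic.intervalIntegral_eq_zero_of_hasDerivAt {g g' : ℝ → ℝ} {T : ℝ}
    (hg : Function.Periodic g T) (hderiv : ∀ x, HasDerivAt g (g' x) x) (a : ℝ)
    (hint : IntervalIntegrable g' volume a (a + T)) :
    ∫ x in a..a + T, g' x = 0 := by
  rw [intervalIntegral.integral_eq_sub_of_hasDerivAt (fun x _ => hderiv x) hint, hg, sub_self]

theorem allenCahn_potential_sub_le {M a b : ℝ} (ha : |a| ≤ M) (hb : |b| ≤ M) :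
    (1 - b ^ 2) ^ 2 / 4 - (1 - a ^ 2) ^ 2 / 4
      ≤ (a ^ 3 - a) * (b - a) + (3 * M ^ 2 - 1) / 2 * (b - a) ^ 2 := by
  have hab : (a + b) ^ 2 + 2 * a ^ 2 ≤ 6 * M ^ 2 := by
    nlinarith [abs_add_le a b, sq_abs a, sq_abs (a + b), abs_nonneg a, abs_nonneg (a + b)]
  have htaylor : (1 - b ^ 2) ^ 2 / 4 - (1 - a ^ 2) ^ 2 / 4 - (a ^ 3 - a) * (b - a)
      = ((a + b) ^ 2 + 2 * a ^ 2 - 2) / 4 * (b - a) ^ 2 := by ring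
  nlinarith [sq_nonneg (b - a)]

theorem L2norm_sq (f : ℝ → ℝ) : L2norm f ^ 2 = ∫ x in (-π)..π, f x ^ 2 :=
  Real.sq_sqrt <| intervalIntegral.integral_nonneg (by linarith [pi_pos]) fun _ _ => sq_nonneg _

theorem imex_step_energyDensity_le {κ τ M c a b p q r : ℝ} (hτ : 0 < τ)
    (hc : c ≤ 1 / τ - (3 * M ^ 2 - 1) / 2)
    (hrel : b - κ ^ 2 * τ * r = a - τ * (a ^ 3 - a)) (ha : |a| ≤ M) (hb : |b| ≤ M) :
    c * (b - a) ^ 2 + κ ^ 2 / 2 * (q - p) ^ 2 + (κ ^ 2 / 2 * q ^ 2 + (1 - b ^ 2) ^ 2 / 4)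
      ≤ κ ^ 2 / 2 * p ^ 2 + (1 - a ^ 2) ^ 2 / 4 + κ ^ 2 * ((q - p) * q + (b - a) * r) := by
  have hpot := allenCahn_potential_sub_le ha hb
  have hforce : (a ^ 3 - a) * (b - a) = κ ^ 2 * r * (b - a) - 1 / τ * (b - a) ^ 2 := by
    field_simp
    linear_combination (b - a) * hrel
  nlinarith [mul_le_mul_of_nonneg_right hc (sq_nonneg (b - a))]

theorem imex_step_energy_le {κ τ M c : ℝ} (hτ : 0 < τ) (hc : c ≤ 1 / τ - (3 * M ^ 2 - 1) / 2)
    {u w : ℝ → ℝ} (hu : ContDiff ℝ 1 u) (hw : ContDiff ℝ 2 w)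
    (huper : Function.Periodic u (2 * π)) (hwper : Function.Periodic w (2 * π))
    (hrel : ∀ x, w x - κ ^ 2 * τ * deriv (deriv w) x = u x - τ * (u x ^ 3 - u x))
    (hub : ∀ x, |u x| ≤ M) (hwb : ∀ x, |w x| ≤ M) :
    c * L2norm (fun x => w x - u x) ^ 2 + κ ^ 2 / 2 * L2norm (deriv fun x => w x - u x) ^ 2
      + energy κ w ≤ energy κ u := by
  have hw' : ContDiff ℝ 1 (deriv w) := (contDiff_succ_iff_deriv.mp hw).2.2
  have hcu := hu.continuous
  have hcw := hw.continuous
  have hcu' := hu.continuous_deriv_one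
  have hcw' := hw'.continuous
  have hcw'' := hw'.continuous_deriv_one
  have hud := hu.differentiable one_ne_zero
  have hwd := hw.differentiable two_ne_zero
  have hdv : deriv (fun x => w x - u x) = fun x => deriv w x - deriv u x :=
    funext fun x => deriv_sub (hwd x) (hud x)
  have hint {f : ℝ → ℝ} (hf : Continuous f) : IntervalIntegrable f volume (-π) π :=
    hf.intervalIntegrable _ _
  have hboundary : ∫ x in (-π)..π,
      ((deriv w x - deriv u x) * deriv w x + (w x - u x) * deriv (deriv w) x) = 0 := by
    have hper : Function.Periodic (fun x => (w x - u x) * deriv w x) (2 * π) :=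
      (hwper.sub huper).mul hwper.deriv
    have hderiv (x : ℝ) := ((hwd x).hasDerivAt.sub (hud x).hasDerivAt).mul
      (hw'.differentiable one_ne_zero x).hasDerivAt
    have := hper.intervalIntegral_eq_zero_of_hasDerivAt hderiv (-π)
      ((by fun_prop : Continuous _).intervalIntegrable _ _)
    rwa [show -π + 2 * π = π by ring] at this
  calc c * L2norm (fun x => w x - u x) ^ 2 + κ ^ 2 / 2 * L2norm (deriv fun x => w x - u x) ^ 2
        + energy κ w
      = ∫ x in (-π)..π, (c * (w x - u x) ^ 2 + κ ^ 2 / 2 * (deriv w x - deriv u x) ^ 2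
          + (κ ^ 2 / 2 * deriv w x ^ 2 + (1 - w x ^ 2) ^ 2 / 4)) := by
        rw [intervalIntegral.integral_add (hint (by fun_prop)) (hint (by fun_prop)),
          intervalIntegral.integral_add (hint (by fun_prop)) (hint (by fun_prop)),
          intervalIntegral.integral_const_mul, intervalIntegral.integral_const_mul,
          L2norm_sq, L2norm_sq, hdv, energy]
    _ ≤ ∫ x in (-π)..π, (κ ^ 2 / 2 * deriv u x ^ 2 + (1 - u x ^ 2) ^ 2 / 4
          + κ ^ 2 * ((deriv w x - deriv u x) * deriv w x + (w x - u x) * deriv (deriv w) x)) :=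
        intervalIntegral.integral_mono_on (by linarith [pi_pos]) (hint (by fun_prop))
          (hint (by fun_prop)) fun x _ => imex_step_energyDensity_le hτ hc (hrel x) (hub x) (hwb x)
    _ = energy κ u := by
        rw [intervalIntegral.integral_add (hint (by fun_prop)) (hint (by fun_prop)),
          intervalIntegral.integral_const_mul, hboundary, mul_zero, add_zero, energy]

theorem imex_energy_inequality_general (τ : ℝ) (hτ0 : 0 < τ) (hτ : τ ≤ 1 / 2)
    (u w : ℝ → ℝ)
    (hureg : ContDiff ℝ (⊤ : ℕ∞) u) (hwreg : ContDiff ℝ (⊤ : ℕ∞) w)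
    (huper : Function.Periodic u (2 * π)) (hwper : Function.Periodic w (2 * π))
    (hrel : ∀ x : ℝ, w x - (0.9 : ℝ) ^ 2 * τ * deriv (deriv w) x
      = u x - τ * (u x ^ 3 - u x))
    (hub : ∀ x : ℝ, |u x| ≤ 1.1) (hwb : ∀ x : ℝ, |w x| ≤ 1.1) :
    1 / (5 * τ) * L2norm (fun x : ℝ => w x - u x) ^ 2
      + (0.9 : ℝ) ^ 2 / 2 * L2norm (deriv (fun x : ℝ => w x - u x)) ^ 2
      + energy 0.9 w
      ≤ energy 0.9 u := by
  have hc : 1 / (5 * τ) ≤ 1 / τ - (3 * 1.1 ^ 2 - 1) / 2 := by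
    rw [div_sub' hτ0.ne', div_le_div_iff₀ (by positivity) hτ0]
    nlinarith
  exact imex_step_energy_le hτ0 hc (hureg.of_le (by exact_mod_cast le_top))
    (hwreg.of_le (WithTop.coe_le_coe.mpr le_top)) huper hwper hrel hub hwb

/-- Energy inequality for one IMEX step, `κ = 0.9`. -/
theorem imex_energy_inequality (τ : ℝ) (hτ0 : 0 < τ) (hτ : τ ≤ 1 / 2)
    (u w : ℝ → ℝ)
    (hureg : ContDiff ℝ (⊤ : ℕ∞) u) (hwreg : ContDiff ℝ (⊤ : ℕ∞) w)
    (huodd : ∀ x : ℝ, u (-x) = - u x) (hwodd : ∀ x : ℝ, w (-x) = - w x)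
    (huper : Function.Periodic u (2 * π)) (hwper : Function.Periodic w (2 * π))
    (hrel : ∀ x : ℝ, w x - (0.9 : ℝ) ^ 2 * τ * deriv (deriv w) x
      = u x - τ * (u x ^ 3 - u x))
    (hEu : energy 0.9 u ≤ π / 2 - 0.001)
    (hub : ∀ x : ℝ, |u x| ≤ 1.1) (hwb : ∀ x : ℝ, |w x| ≤ 1.1) :
    1 / (5 * τ) * L2norm (fun x : ℝ => w x - u x) ^ 2
      + (0.9 : ℝ) ^ 2 / 2 * L2norm (deriv (fun x : ℝ => w x - u x)) ^ 2
      + energy 0.9 w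
      ≤ energy 0.9 u :=
  imex_energy_inequality_general τ hτ0 hτ u w hureg hwreg huper hwper hrel hub hwb
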